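/- Let N ≥ 1 and M ≥ 1 be natural numbers and let α_1, …, α_M be pairwise distinct multi-indices in ℕ^N. Then for Lebesgue-almost every family of real numbers x = (x_{l,j})_{1≤l≤M, 1≤j≤N} ∈ ℝ^{M×N}, the M × M matrix whose (l, r) entry is the monomial ∏_{j=1}^N x_{l,j}^{α_r(j)} is invertible. -/

import Mathlib

/-!
The determinant is a polynomial `P` in the `MN` entries `x_{l,j}`. Expanding it over permutations
`τ`, the term of `τ` is `± ∏_r ∏_j x_{τ r, j}^{α_r(j)}`, and since the `α_r` are distinct these
monomials are pairwise distinct; so `P ≠ 0`. The zero set of a nonzero real polynomial is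
Lebesgue-null: by Fubini and induction on the number of variables, since for almost every choice
of the other variables `P` is a nonzero polynomial in the first one, with finitely many roots.
-/

open MeasureTheory Matrix

theorem Polynomial.ae_eval_ne_zero {R : Type*} [CommRing R] [IsDomain R] [MeasurableSpace R]
    (μ : Measure R) [NullSingletonClass μ] {p : Polynomial R} (hp : p ≠ 0) :
    ∀ᵐ y ∂μ, p.eval y ≠ 0 :=
  measure_eq_zero_iff_ae_notMem.mp ((Polynomial.finite_setOfPred_isRoot hp).measure_zero μ)

namespace MvPolynomial

section AeEvalNeZero

variable (μ : Measure ℝ) [SigmaFinite μ] [NullSingletonClass μ]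

theorem ae_eval_ne_zero_of_fin {n : ℕ} {p : MvPolynomial (Fin n) ℝ} (hp : p ≠ 0) :
    ∀ᵐ x ∂Measure.pi fun _ => μ, eval x p ≠ 0 := by
  induction n with
  | zero =>
    obtain ⟨c, rfl⟩ := C_surjective (Fin 0) p
    exact .of_forall fun x => by simpa using hp
  | succ n ih =>
    set q := finSuccEquiv ℝ n p
    have hlead : q.leadingCoeff ≠ 0 :=
      Polynomial.leadingCoeff_ne_zero.mpr ((EmbeddingLike.map_ne_zero_iff).mpr hp)
    have hsection : ∀ᵐ s ∂Measure.pi fun _ => μ, ∀ᵐ y ∂μ, eval (Fin.cons y s) p ≠ 0 := by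
      filter_upwards [ih hlead] with s hs
      have hqs : q.map (eval s) ≠ 0 := fun h => hs <| by
        simpa using congrArg (Polynomial.coeff · q.natDegree) h
      simpa only [eval_eq_eval_mv_eval'] using Polynomial.ae_eval_ne_zero μ hqs
    have hcons : Measurable fun z : ℝ × (Fin n → ℝ) => eval (Fin.cons z.1 z.2) p :=
      (continuous_eval p).measurable.comp (by fun_prop)
    have hmeas : MeasurableSet {z : ℝ × (Fin n → ℝ) | eval (Fin.cons z.1 z.2) p ≠ 0} :=
      hcons (measurableSet_singleton 0).compl
    have hmeas_swap : MeasurableSet {w : (Fin n → ℝ) × ℝ | eval (Fin.cons w.2 w.1) p ≠ 0} :=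
      (hcons.comp measurable_swap) (measurableSet_singleton 0).compl
    have hprod : ∀ᵐ z ∂μ.prod (Measure.pi fun _ => μ), eval (Fin.cons z.1 z.2) p ≠ 0 :=
      (Measure.ae_prod_iff_ae_ae hmeas).mpr ((Measure.ae_ae_comm hmeas_swap).mp hsection)
    filter_upwards [(measurePreserving_piFinSuccAbove (fun _ => μ) 0).quasiMeasurePreserving.ae
      hprod] with x hx
    simpa [MeasurableEquiv.piFinSuccAbove_apply, Fin.insertNthEquiv] using hx

theorem ae_eval_ne_zero {σ : Type*} [Fintype σ] {p : MvPolynomial σ ℝ} (hp : p ≠ 0) :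
    ∀ᵐ x ∂Measure.pi fun _ : σ => μ, eval x p ≠ 0 := by
  let e := Fintype.equivFin σ
  have hrename : rename e p ≠ 0 := (rename_injective e e.injective).ne_iff' (map_zero _) |>.mpr hp
  filter_upwards [(measurePreserving_piCongrLeft (fun _ => μ) e).quasiMeasurePreserving.ae
    (ae_eval_ne_zero_of_fin μ hrename)] with x hx
  simpa [eval_rename, Function.comp_def, MeasurableEquiv.piCongrLeft_apply_apply] using hx

end AeEvalNeZero

theorem det_monomial_ne_zero {n σ R : Type*} [Fintype n] [DecidableEq n] [CommRing R]
    [Nontrivial R] (e : n → n → σ →₀ ℕ)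
    (he : ∀ τ : Equiv.Perm n, ∑ r, e (τ r) r = ∑ r, e r r → τ = 1) :
    (Matrix.of fun l r => monomial (e l r) (1 : R)).det ≠ 0 := by
  classical
  intro h
  have hcoeff := congrArg (coeff (∑ r, e r r)) h
  rw [det_apply, coeff_sum, Finset.sum_eq_single 1] at hcoeff
  · simp [← monomial_sum_one, coeff_monomial] at hcoeff
  · intro τ _ hτ
    simp only [of_apply, ← monomial_sum_one, Units.smul_def, coeff_smul]
    rw [coeff_monomial, if_neg (fun h => hτ (he τ h)), smul_zero]
  · simp

theorem det_prod_X_pow_ne_zero {m n R : Type*} [Fintype m] [DecidableEq m] [Fintype n]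
    [CommRing R] [Nontrivial R] {α : m → n → ℕ} (hα : Function.Injective α) :
    (Matrix.of fun l r => ∏ j, (X (l, j) : MvPolynomial (m × n) R) ^ α r j).det ≠ 0 := by
  classical
  let e : m → m → (m × n) →₀ ℕ := fun l r => ∑ j, Finsupp.single (l, j) (α r j)
  have he : ∀ (τ : Equiv.Perm m) l j, (∑ r, e (τ r) r) (l, j) = α (τ⁻¹ l) j := by
    intro τ l j
    simp [e, Finsupp.single_apply, ← Equiv.Perm.eq_inv_iff_eq, ite_and]
  have hentry : ∀ l r, ∏ j, (X (l, j) : MvPolynomial (m × n) R) ^ α r j = monomial (e l r) 1 := by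
    intro l r
    simp [e, monomial_sum_one, X_pow_eq_monomial]
  simp only [hentry]
  refine det_monomial_ne_zero e fun τ hτ => Equiv.ext fun r => ?_
  have hrow : α r = α (τ r) := by
    funext j
    have hdiag : (∑ r, e r r) (τ r, j) = α (τ r) j := by simpa using he 1 (τ r) j
    simpa [he, hdiag] using congrArg (fun f => f (τ r, j)) hτ
  exact (hα hrow).symm

end MvPolynomial

theorem measurePreserving_uncurry {ι κ α : Type*} [Fintype ι] [Fintype κ] [MeasurableSpace α]
    (μ : Measure α) [SigmaFinite μ] :
    MeasurePreserving (Function.uncurry : (ι → κ → α) → ι × κ → α)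
      (Measure.pi fun _ => Measure.pi fun _ => μ) (Measure.pi fun _ => μ) := by
  have hm : Measurable (Function.uncurry : (ι → κ → α) → ι × κ → α) := by fun_prop
  refine ⟨hm, (Measure.pi_eq fun s hs => ?_).symm⟩
  have hpre : Function.uncurry ⁻¹' Set.univ.pi s
      = Set.univ.pi fun i => Set.univ.pi fun k => s (i, k) := by
    ext x
    simp [Set.mem_pi, Prod.forall]
  rw [Measure.map_apply hm (.univ_pi hs), hpre, Measure.pi_pi, Fintype.prod_prod_type]
  simp [Measure.pi_pi]

theorem stmt_1_general (N M : ℕ)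
    (α : Fin M → (Fin N → ℕ)) (hα : Function.Injective α) :
    ∀ᵐ x : Fin M → Fin N → ℝ ∂volume,
      IsUnit (Matrix.of (fun l r : Fin M => ∏ j : Fin N, x l j ^ α r j)).det := by
  set P : MvPolynomial (Fin M × Fin N) ℝ :=
    (Matrix.of fun l r => ∏ j, (MvPolynomial.X (l, j)) ^ α r j).det
  have hP : P ≠ 0 := MvPolynomial.det_prod_X_pow_ne_zero hα
  filter_upwards [(measurePreserving_uncurry volume).quasiMeasurePreserving.ae
    (MvPolynomial.ae_eval_ne_zero volume hP)] with x hx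
  have heval : MvPolynomial.eval (Function.uncurry x) P
      = (Matrix.of fun l r : Fin M => ∏ j : Fin N, x l j ^ α r j).det := by
    rw [RingHom.map_det]
    congr 1
    ext l r
    simp
  rwa [isUnit_iff_ne_zero, ← heval]

/-- Generalized Vandermonde nonsingularity: for pairwise distinct multi-indices
`α_1, …, α_M ∈ ℕ^N`, for Lebesgue-almost every `x = (x_{l,j}) ∈ ℝ^{M×N}`, the
`M × M` matrix with `(l, r)` entry `∏_j x_{l,j}^{α_r(j)}` is invertible. -/
theorem stmt_1 (N M : ℕ) (hN : 1 ≤ N) (hM : 1 ≤ M)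
    (α : Fin M → (Fin N → ℕ)) (hα : Function.Injective α) :
    ∀ᵐ x : Fin M → Fin N → ℝ ∂volume,
      IsUnit (Matrix.of (fun l r : Fin M => ∏ j : Fin N, x l j ^ α r j)).det :=
  stmt_1_general N M α hα
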